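/- Let κ² ∈ (0,1] and t ≥ 100, and let Z₁ ~ N(0,t), Z₂ ~ N(0,t) be independent, h ∈ [0,1], m > 0. Set W = √h Z₁ + √(1−h) Z₂. Then E[ (2πκ²)^{-1/2} e^{-(W−m)²/(2κ²)} |Z₁| ] ≤ C e^{-m²/(2(t+κ²))} (√h·m + 2√t) / √(2π(t+κ²)) for an absolute constant C. -/

import Mathlib

open MeasureTheory ProbabilityTheory Real Filter
open scoped NNReal ENNReal

section GaussAux

lemma gauss_Ioi {p : ℝ} (hp : 0 < p) :
    ∫ z in Set.Ioi (0:ℝ), z * Real.exp (-p * z ^ 2) = (2 * p)⁻¹ := by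
  have A : ∀ x : ℝ, HasDerivAt (fun x : ℝ => -(2 * p)⁻¹ * Real.exp (-p * x ^ 2))
      (x * Real.exp (-p * x ^ 2)) x := by
    intro x
    convert (((hasDerivAt_pow 2 x).const_mul (-p)).exp.const_mul (-(2 * p)⁻¹)) using 1
    · rfl
    · rfl
    field_simp
    ring
  have B : Tendsto (fun y : ℝ => -(2 * p)⁻¹ * Real.exp (-p * y ^ 2)) atTop
      (nhds (-(2 * p)⁻¹ * 0)) := by
    refine Tendsto.const_mul _ ?_
    have h1 : Tendsto (fun y : ℝ => -p * y ^ 2) atTop atBot :=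
      (tendsto_pow_atTop two_ne_zero).const_mul_atTop_of_neg (neg_lt_zero.2 hp)
    exact Real.tendsto_exp_atBot.comp h1
  have := integral_Ioi_of_hasDerivAt_of_tendsto' (a := 0) (fun x _ => A x)
    (integrable_mul_exp_neg_mul_sq hp).integrableOn B
  simpa using this

lemma gauss_abs {p : ℝ} (hp : 0 < p) :
    ∫ z : ℝ, |z| * Real.exp (-(p * z ^ 2)) = p⁻¹ := by
  have h : ∀ z : ℝ, |z| * Real.exp (-(p * z ^ 2)) = (fun x => x * Real.exp (-p * x ^ 2)) |z| := by
    intro z; simp only [sq_abs, neg_mul]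
  calc ∫ z : ℝ, |z| * Real.exp (-(p * z ^ 2))
      = ∫ z : ℝ, (fun x => x * Real.exp (-p * x ^ 2)) |z| := by
        exact integral_congr_ae (Filter.Eventually.of_forall h)
    _ = 2 * ∫ z in Set.Ioi (0:ℝ), z * Real.exp (-p * z ^ 2) :=
        integral_comp_abs (f := fun x => x * Real.exp (-p * x ^ 2))
    _ = p⁻¹ := by rw [gauss_Ioi hp]; field_simp

lemma gauss_shift (p μ : ℝ) : ∫ z : ℝ, Real.exp (-(p * (z - μ) ^ 2)) = Real.sqrt (π / p) := by
  calc ∫ z : ℝ, Real.exp (-(p * (z - μ) ^ 2))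
      = ∫ z : ℝ, Real.exp (-p * z ^ 2) := by
        rw [← integral_sub_right_eq_self (fun z : ℝ => Real.exp (-p * z ^ 2)) μ]
        simp only [neg_mul]
    _ = Real.sqrt (π / p) := integral_gaussian p

lemma gauss_abs_shift {p : ℝ} (μ : ℝ) (hp : 0 < p) :
    ∫ z : ℝ, |z - μ| * Real.exp (-(p * (z - μ) ^ 2)) = p⁻¹ := by
  rw [← gauss_abs hp]
  exact (integral_sub_right_eq_self (fun z : ℝ => |z| * Real.exp (-(p * z ^ 2))) μ)

lemma integrable_abs_shift {p : ℝ} (μ : ℝ) (hp : 0 < p) :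
    Integrable fun z : ℝ => |z - μ| * Real.exp (-(p * (z - μ) ^ 2)) := by
  have base : Integrable fun x : ℝ => |x| * Real.exp (-(p * x ^ 2)) := by
    refine (integrable_mul_exp_neg_mul_sq hp).abs.congr ?_
    filter_upwards with x
    rw [abs_mul, abs_of_pos (Real.exp_pos _), neg_mul]
  exact base.comp_sub_right μ

lemma integrable_exp_shift {p : ℝ} (μ : ℝ) (hp : 0 < p) :
    Integrable fun z : ℝ => Real.exp (-(p * (z - μ) ^ 2)) := by
  have base : Integrable fun x : ℝ => Real.exp (-(p * x ^ 2)) := by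
    simpa only [neg_mul] using integrable_exp_neg_mul_sq hp
  exact base.comp_sub_right μ

lemma integral_gaussianReal_pdf {v : ℝ≥0} (hv : v ≠ 0) (f : ℝ → ℝ) :
    ∫ x, f x ∂(gaussianReal 0 v) = ∫ x, gaussianPDFReal 0 v x * f x := by
  rw [gaussianReal_of_var_ne_zero _ hv]
  have h : gaussianPDF 0 v = fun x => ((Real.toNNReal (gaussianPDFReal 0 v x) : ℝ≥0) : ℝ≥0∞) :=
    rfl
  rw [h, integral_withDensity_eq_integral_smul
    ((measurable_gaussianPDFReal 0 v).real_toNNReal) f]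
  congr 1
  funext x
  rw [NNReal.smul_def, Real.coe_toNNReal _ (gaussianPDFReal_nonneg 0 v x), smul_eq_mul]

lemma sqrt_const_id {t k S p : ℝ} (ht : 0 < t) (hk : 0 < k) (hS : 0 < S)
    (hp : p = S / (2 * k * t)) :
    (Real.sqrt (2 * π * t))⁻¹ * (Real.sqrt (2 * π * k))⁻¹ * Real.sqrt (π / p)
      = (Real.sqrt (2 * π * S))⁻¹ := by
  have hπ := Real.pi_pos
  have hp' : 0 < p := by rw [hp]; positivity
  have h1 : (Real.sqrt (2 * π * t))⁻¹ * (Real.sqrt (2 * π * k))⁻¹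
      = (Real.sqrt ((2 * π * t) * (2 * π * k)))⁻¹ := by
    rw [← mul_inv, ← Real.sqrt_mul (by positivity : (0:ℝ) ≤ 2 * π * t)]
  rw [h1, inv_mul_eq_div, ← Real.sqrt_div (by positivity : (0:ℝ) ≤ π / p)]
  rw [show π / p / (2 * π * t * (2 * π * k)) = (2 * π * S)⁻¹ by
    rw [hp]; field_simp]
  exact Real.sqrt_inv _

lemma inner_eq {t k : ℝ} (a b : ℝ) (ht : 0 < t) (hk : 0 < k) :
    ∫ z : ℝ, gaussianPDFReal 0 t.toNNReal z *
        ((Real.sqrt (2 * π * k))⁻¹ * Real.exp (-(a * z - b) ^ 2 / (2 * k)))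
      = (Real.sqrt (2 * π * (a ^ 2 * t + k)))⁻¹ *
          Real.exp (-b ^ 2 / (2 * (a ^ 2 * t + k))) := by
  have hπ := Real.pi_pos
  set S : ℝ := a ^ 2 * t + k with hSdef
  have hS : 0 < S := by positivity
  set p : ℝ := S / (2 * k * t) with hpdef
  have hp : 0 < p := by positivity
  set μ₀ : ℝ := a * b * t / S with hμdef
  have hco : ((t.toNNReal : ℝ)) = t := Real.coe_toNNReal _ ht.le
  have key : ∀ z : ℝ, gaussianPDFReal 0 t.toNNReal z *
      ((Real.sqrt (2 * π * k))⁻¹ * Real.exp (-(a * z - b) ^ 2 / (2 * k)))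
      = ((Real.sqrt (2 * π * t))⁻¹ * (Real.sqrt (2 * π * k))⁻¹ * Real.exp (-b ^ 2 / (2 * S))) *
        Real.exp (-(p * (z - μ₀) ^ 2)) := by
    intro z
    rw [gaussianPDFReal]
    simp only [hco]
    have hexp : -(z - 0) ^ 2 / (2 * t) + -(a * z - b) ^ 2 / (2 * k)
        = -(p * (z - μ₀) ^ 2) + -b ^ 2 / (2 * S) := by
      rw [hpdef, hμdef, hSdef]
      field_simp
      ring
    calc (Real.sqrt (2 * π * t))⁻¹ * Real.exp (-(z - 0) ^ 2 / (2 * t)) *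
          ((Real.sqrt (2 * π * k))⁻¹ * Real.exp (-(a * z - b) ^ 2 / (2 * k)))
        = (Real.sqrt (2 * π * t))⁻¹ * (Real.sqrt (2 * π * k))⁻¹ *
            (Real.exp (-(z - 0) ^ 2 / (2 * t)) * Real.exp (-(a * z - b) ^ 2 / (2 * k))) := by
          ring
      _ = (Real.sqrt (2 * π * t))⁻¹ * (Real.sqrt (2 * π * k))⁻¹ *
            (Real.exp (-(p * (z - μ₀) ^ 2)) * Real.exp (-b ^ 2 / (2 * S))) := by
          rw [← Real.exp_add, hexp, Real.exp_add]
      _ = _ := by ring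
  rw [integral_congr_ae (Filter.Eventually.of_forall key), integral_const_mul,
    gauss_shift p μ₀]
  rw [show (Real.sqrt (2 * π * t))⁻¹ * (Real.sqrt (2 * π * k))⁻¹ * Real.exp (-b ^ 2 / (2 * S)) *
      Real.sqrt (π / p) = (Real.sqrt (2 * π * t))⁻¹ * (Real.sqrt (2 * π * k))⁻¹ *
      Real.sqrt (π / p) * Real.exp (-b ^ 2 / (2 * S)) from by ring,
    sqrt_const_id ht hk hS hpdef]

lemma term1_le {t S T q : ℝ} (ht : 0 < t) (hS : 0 < S) (hT : 0 < T) (hST : S ≤ T)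
    (hq : q = T / (2 * S * t)) :
    (Real.sqrt (2 * π * t))⁻¹ * (Real.sqrt (2 * π * S))⁻¹ * q⁻¹
      ≤ Real.sqrt t * (Real.sqrt (2 * π * T))⁻¹ := by
  have hπ := Real.pi_pos
  have hq' : 0 < q := by rw [hq]; positivity
  have e1 : q⁻¹ = 2 * S * t / T := by rw [hq, inv_div]
  have LHSeq : (Real.sqrt (2 * π * t))⁻¹ * (Real.sqrt (2 * π * S))⁻¹ * q⁻¹
      = Real.sqrt (q⁻¹ ^ 2 / ((2 * π * t) * (2 * π * S))) := by
    rw [Real.sqrt_div (by positivity : (0:ℝ) ≤ q⁻¹ ^ 2),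
      Real.sqrt_sq (by positivity : (0:ℝ) ≤ q⁻¹),
      Real.sqrt_mul (by positivity : (0:ℝ) ≤ 2 * π * t)]
    ring
  have RHSeq : Real.sqrt t * (Real.sqrt (2 * π * T))⁻¹ = Real.sqrt (t / (2 * π * T)) := by
    rw [Real.sqrt_div ht.le]
    ring
  rw [LHSeq, RHSeq]
  apply Real.sqrt_le_sqrt
  rw [e1, div_pow, div_div, div_le_div_iff₀ (by positivity) (by positivity)]
  have h0 : 0 ≤ 4 * π * t ^ 2 * S * T := by positivity
  have h1 : 0 ≤ π * T - 2 * S := by nlinarith [Real.pi_gt_three]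
  nlinarith [mul_nonneg h0 h1]

lemma outer_le {t S c m : ℝ} (ht : 0 < t) (hS : 0 < S) (hc : 0 ≤ c) (hm : 0 ≤ m) :
    ∫ z : ℝ, gaussianPDFReal 0 t.toNNReal z *
        ((Real.sqrt (2 * π * S))⁻¹ * Real.exp (-(c * z - m) ^ 2 / (2 * S)) * |z|)
      ≤ Real.exp (-m ^ 2 / (2 * (c ^ 2 * t + S))) *
          (c * m * t / (c ^ 2 * t + S) + Real.sqrt t) /
          Real.sqrt (2 * π * (c ^ 2 * t + S)) := by
  have hπ := Real.pi_pos
  set T : ℝ := c ^ 2 * t + S with hTdef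
  have hT : 0 < T := by positivity
  set q : ℝ := T / (2 * S * t) with hqdef
  have hq : 0 < q := by positivity
  set μ : ℝ := c * m * t / T with hμdef
  have hμ0 : 0 ≤ μ := by positivity
  have hco : ((t.toNNReal : ℝ)) = t := Real.coe_toNNReal _ ht.le
  set A : ℝ := (Real.sqrt (2 * π * t))⁻¹ * (Real.sqrt (2 * π * S))⁻¹ with hA
  set e : ℝ := Real.exp (-m ^ 2 / (2 * T)) with he
  have he0 : 0 ≤ e := Real.exp_nonneg _
  have key : ∀ z : ℝ, gaussianPDFReal 0 t.toNNReal z *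
      ((Real.sqrt (2 * π * S))⁻¹ * Real.exp (-(c * z - m) ^ 2 / (2 * S)) * |z|)
      = (A * e) * (Real.exp (-(q * (z - μ) ^ 2)) * |z|) := by
    intro z
    rw [gaussianPDFReal]
    simp only [hco]
    have hexp : -(z - 0) ^ 2 / (2 * t) + -(c * z - m) ^ 2 / (2 * S)
        = -(q * (z - μ) ^ 2) + -m ^ 2 / (2 * T) := by
      rw [hqdef, hμdef, hTdef]
      field_simp
      ring
    calc (Real.sqrt (2 * π * t))⁻¹ * Real.exp (-(z - 0) ^ 2 / (2 * t)) *
          ((Real.sqrt (2 * π * S))⁻¹ * Real.exp (-(c * z - m) ^ 2 / (2 * S)) * |z|)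
        = A * (Real.exp (-(z - 0) ^ 2 / (2 * t)) * Real.exp (-(c * z - m) ^ 2 / (2 * S))) *
            |z| := by rw [hA]; ring
      _ = A * (Real.exp (-(q * (z - μ) ^ 2)) * Real.exp (-m ^ 2 / (2 * T))) * |z| := by
          rw [← Real.exp_add, hexp, Real.exp_add]
      _ = _ := by rw [he]; ring
  rw [integral_congr_ae (Filter.Eventually.of_forall key), integral_const_mul]
  have hbound : ∫ z : ℝ, Real.exp (-(q * (z - μ) ^ 2)) * |z| ≤ q⁻¹ + μ * Real.sqrt (π / q) := by
    have hg : Integrable (fun z : ℝ => |z - μ| * Real.exp (-(q * (z - μ) ^ 2)) +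
        μ * Real.exp (-(q * (z - μ) ^ 2))) :=
      (integrable_abs_shift μ hq).add ((integrable_exp_shift μ hq).const_mul μ)
    have hmono : ∫ z : ℝ, Real.exp (-(q * (z - μ) ^ 2)) * |z|
        ≤ ∫ z : ℝ, (|z - μ| * Real.exp (-(q * (z - μ) ^ 2)) +
            μ * Real.exp (-(q * (z - μ) ^ 2))) := by
      refine integral_mono_of_nonneg (Filter.Eventually.of_forall fun z => by positivity) hg
        (Filter.Eventually.of_forall fun z => ?_)
      have h1 : |z| ≤ |z - μ| + μ := by
        calc |z| = |(z - μ) + μ| := by ring_nf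
          _ ≤ |z - μ| + |μ| := abs_add_le _ _
          _ = |z - μ| + μ := by rw [abs_of_nonneg hμ0]
      calc Real.exp (-(q * (z - μ) ^ 2)) * |z|
          ≤ Real.exp (-(q * (z - μ) ^ 2)) * (|z - μ| + μ) :=
            mul_le_mul_of_nonneg_left h1 (Real.exp_nonneg _)
        _ = |z - μ| * Real.exp (-(q * (z - μ) ^ 2)) + μ * Real.exp (-(q * (z - μ) ^ 2)) := by
            ring
    rw [integral_add (integrable_abs_shift μ hq) ((integrable_exp_shift μ hq).const_mul μ),
      gauss_abs_shift μ hq, integral_const_mul, gauss_shift q μ] at hmono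
    exact hmono
  calc A * e * ∫ z : ℝ, Real.exp (-(q * (z - μ) ^ 2)) * |z|
      ≤ A * e * (q⁻¹ + μ * Real.sqrt (π / q)) := by
        apply mul_le_mul_of_nonneg_left hbound
        rw [hA]; positivity
    _ = e * (A * q⁻¹ + μ * (A * Real.sqrt (π / q))) := by ring
    _ ≤ e * (Real.sqrt t * (Real.sqrt (2 * π * T))⁻¹ + μ * (Real.sqrt (2 * π * T))⁻¹) := by
        apply mul_le_mul_of_nonneg_left _ he0
        have h2 : A * Real.sqrt (π / q) = (Real.sqrt (2 * π * T))⁻¹ := by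
          rw [hA]; exact sqrt_const_id ht hS hT hqdef
        rw [h2]
        have h1 : A * q⁻¹ ≤ Real.sqrt t * (Real.sqrt (2 * π * T))⁻¹ := by
          rw [hA]
          exact term1_le ht hS hT (by nlinarith [sq_nonneg c, ht.le]) hqdef
        linarith
    _ = e * (μ + Real.sqrt t) / Real.sqrt (2 * π * T) := by
        rw [div_eq_mul_inv]; ring

end GaussAux

/-- Two-dimensional Gaussian computation: for independent `Z₁, Z₂ ∼ N(0,t)`,
`W = √h Z₁ + √(1−h) Z₂`, and `κ² ≤ 1`, `t ≥ 100`,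
`E[(2πκ²)^{-1/2} e^{-(W−m)²/(2κ²)} |Z₁|]
  ≤ C e^{-m²/(2(t+κ²))}(√h m + 2√t)/√(2π(t+κ²))` for an absolute constant `C`. -/
theorem gaussian_smoothed_abs_bound :
    ∃ C : ℝ, 0 < C ∧ ∀ κ t h m : ℝ,
      0 < κ ^ 2 → κ ^ 2 ≤ 1 → 100 ≤ t → 0 ≤ h → h ≤ 1 → 0 < m →
      (∫ z₁, ∫ z₂, (Real.sqrt (2 * Real.pi * κ ^ 2))⁻¹ *
          Real.exp (-(Real.sqrt h * z₁ + Real.sqrt (1 - h) * z₂ - m) ^ 2 / (2 * κ ^ 2)) *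
          |z₁|
          ∂(gaussianReal 0 (Real.toNNReal t)) ∂(gaussianReal 0 (Real.toNNReal t))) ≤
        C * Real.exp (-m ^ 2 / (2 * (t + κ ^ 2))) *
          (Real.sqrt h * m + 2 * Real.sqrt t) / Real.sqrt (2 * Real.pi * (t + κ ^ 2)) := by
  refine ⟨1, one_pos, fun κ t h m hk0 hk1 ht100 hh0 hh1 hm => ?_⟩
  have ht : (0:ℝ) < t := by linarith
  have hπ := Real.pi_pos
  have hvt : (Real.toNNReal t) ≠ 0 := by
    simp only [ne_eq, Real.toNNReal_eq_zero, not_le]; linarith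
  set k : ℝ := κ ^ 2 with hkdef
  set S : ℝ := (1 - h) * t + k with hSdef
  have h1h : (0:ℝ) ≤ 1 - h := by linarith
  have hS : 0 < S := by
    have := mul_nonneg h1h ht.le
    rw [hSdef]; nlinarith
  have ha2 : (Real.sqrt (1 - h)) ^ 2 = 1 - h := Real.sq_sqrt h1h
  have hc2 : (Real.sqrt h) ^ 2 = h := Real.sq_sqrt hh0
  have step1 : ∀ z₁ : ℝ, (∫ z₂, (Real.sqrt (2 * Real.pi * κ ^ 2))⁻¹ *
        Real.exp (-(Real.sqrt h * z₁ + Real.sqrt (1 - h) * z₂ - m) ^ 2 / (2 * κ ^ 2)) * |z₁|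
        ∂(gaussianReal 0 (Real.toNNReal t)))
      = (Real.sqrt (2 * Real.pi * S))⁻¹ *
          Real.exp (-(Real.sqrt h * z₁ - m) ^ 2 / (2 * S)) * |z₁| := by
    intro z₁
    rw [integral_mul_const]
    congr 1
    rw [integral_gaussianReal_pdf hvt]
    calc ∫ z₂ : ℝ, gaussianPDFReal 0 t.toNNReal z₂ *
          ((Real.sqrt (2 * Real.pi * κ ^ 2))⁻¹ *
            Real.exp (-(Real.sqrt h * z₁ + Real.sqrt (1 - h) * z₂ - m) ^ 2 / (2 * κ ^ 2)))
        = ∫ z₂ : ℝ, gaussianPDFReal 0 t.toNNReal z₂ *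
          ((Real.sqrt (2 * Real.pi * k))⁻¹ *
            Real.exp (-(Real.sqrt (1 - h) * z₂ - (m - Real.sqrt h * z₁)) ^ 2 / (2 * k))) := by
          refine integral_congr_ae (Filter.Eventually.of_forall fun z₂ => ?_)
          dsimp only
          rw [show -(Real.sqrt h * z₁ + Real.sqrt (1 - h) * z₂ - m) ^ 2
              = -(Real.sqrt (1 - h) * z₂ - (m - Real.sqrt h * z₁)) ^ 2 from by ring]
      _ = (Real.sqrt (2 * Real.pi * ((Real.sqrt (1 - h)) ^ 2 * t + k)))⁻¹ *
            Real.exp (-(m - Real.sqrt h * z₁) ^ 2 /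
              (2 * ((Real.sqrt (1 - h)) ^ 2 * t + k))) :=
          inner_eq (Real.sqrt (1 - h)) (m - Real.sqrt h * z₁) ht hk0
      _ = (Real.sqrt (2 * Real.pi * S))⁻¹ *
            Real.exp (-(Real.sqrt h * z₁ - m) ^ 2 / (2 * S)) := by
          rw [ha2, show -(m - Real.sqrt h * z₁) ^ 2 = -(Real.sqrt h * z₁ - m) ^ 2 from by ring,
            hSdef]
  have hTconv : (Real.sqrt h) ^ 2 * t + S = t + k := by rw [hc2, hSdef]; ring
  calc (∫ z₁, ∫ z₂, (Real.sqrt (2 * Real.pi * κ ^ 2))⁻¹ *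
          Real.exp (-(Real.sqrt h * z₁ + Real.sqrt (1 - h) * z₂ - m) ^ 2 / (2 * κ ^ 2)) *
          |z₁| ∂(gaussianReal 0 (Real.toNNReal t)) ∂(gaussianReal 0 (Real.toNNReal t)))
      = ∫ z₁, (Real.sqrt (2 * Real.pi * S))⁻¹ *
          Real.exp (-(Real.sqrt h * z₁ - m) ^ 2 / (2 * S)) * |z₁|
          ∂(gaussianReal 0 (Real.toNNReal t)) :=
        integral_congr_ae (Filter.Eventually.of_forall step1)
    _ = ∫ z₁ : ℝ, gaussianPDFReal 0 t.toNNReal z₁ *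
          ((Real.sqrt (2 * Real.pi * S))⁻¹ *
            Real.exp (-(Real.sqrt h * z₁ - m) ^ 2 / (2 * S)) * |z₁|) :=
        integral_gaussianReal_pdf hvt _
    _ ≤ Real.exp (-m ^ 2 / (2 * ((Real.sqrt h) ^ 2 * t + S))) *
          (Real.sqrt h * m * t / ((Real.sqrt h) ^ 2 * t + S) + Real.sqrt t) /
          Real.sqrt (2 * Real.pi * ((Real.sqrt h) ^ 2 * t + S)) :=
        outer_le ht hS (Real.sqrt_nonneg h) hm.le
    _ = Real.exp (-m ^ 2 / (2 * (t + k))) *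
          (Real.sqrt h * m * t / (t + k) + Real.sqrt t) /
          Real.sqrt (2 * Real.pi * (t + k)) := by rw [hTconv]
    _ ≤ 1 * Real.exp (-m ^ 2 / (2 * (t + k))) *
          (Real.sqrt h * m + 2 * Real.sqrt t) / Real.sqrt (2 * Real.pi * (t + k)) := by
        rw [one_mul]
        have htk : 0 < t + k := by nlinarith
        apply div_le_div_of_nonneg_right ?_ (by positivity)
        apply mul_le_mul_of_nonneg_left ?_ (Real.exp_nonneg _)
        have h1 : Real.sqrt h * m * t / (t + k) ≤ Real.sqrt h * m := by
          rw [div_le_iff₀ htk]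
          nlinarith [mul_nonneg (Real.sqrt_nonneg h) hm.le, hk0]
        have h2 : Real.sqrt t ≤ 2 * Real.sqrt t := by
          nlinarith [Real.sqrt_nonneg t]
        linarith
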